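/- (Delsarte's Theorem) Let F_q be a finite extension of F_2 and C ⊆ F_q^n an F_q-linear code. Then (Trace(C))^⊥ = Res(C^⊥), where Trace(C) = {(Tr_{F_q/F_2}(v_1),…,Tr_{F_q/F_2}(v_n)) : v ∈ C} ⊆ F_2^n and Res(C^⊥) = C^⊥ ∩ F_2^n. -/

import Mathlib

open Finset

/-- The dual code of a linear code `C ⊆ K^n` with respect to `⟨v,w⟩ = ∑ v_i w_i`. -/
def dualCode (K : Type*) [Field K] (n : ℕ) (C : Submodule K (Fin n → K)) :
    Submodule K (Fin n → K) where
  carrier := {v | ∀ w ∈ C, ∑ i, v i * w i = 0}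
  add_mem' := by
    intro a b ha hb w hw
    simp only [Pi.add_apply, add_mul]
    rw [Finset.sum_add_distrib, ha w hw, hb w hw, add_zero]
  zero_mem' := by intro w hw; simp
  smul_mem' := by
    intro c a ha w hw
    simp only [Pi.smul_apply, smul_eq_mul, mul_assoc, ← Finset.mul_sum, ha w hw, mul_zero]

lemma mem_dualCode {K : Type*} [Field K] {n : ℕ} {C : Submodule K (Fin n → K)}
    {v : Fin n → K} : v ∈ dualCode K n C ↔ ∀ w ∈ C, ∑ i, v i * w i = 0 := Iff.rfl

lemma trace_key (n : ℕ) (F : Type*) [Field F] [Fintype F] [Algebra (ZMod 2) F]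
    (v : Fin n → ZMod 2) (w : Fin n → F) :
    ∑ i, v i * Algebra.trace (ZMod 2) F (w i)
      = Algebra.trace (ZMod 2) F (∑ i, algebraMap (ZMod 2) F (v i) * w i) := by
  rw [map_sum]
  refine Finset.sum_congr rfl fun i _ => ?_
  rw [← Algebra.smul_def, map_smul, smul_eq_mul]

/-- Delsarte's Theorem: for a finite extension `F_q / F_2` and an
`F_q`-linear code `C ⊆ F_q^n`, one has `(Trace C)^⊥ = Res (C^⊥)`, where `Trace C` is the
coordinatewise trace code and `Res` is restriction of scalars to `F_2` (realized as the
preimage under the coordinatewise inclusion `F_2^n ↪ F_q^n`). -/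
theorem stmt_11 (n : ℕ) (F : Type*) [Field F] [Fintype F] [Algebra (ZMod 2) F]
    (C : Submodule F (Fin n → F)) :
    dualCode (ZMod 2) n
        (Submodule.map
          (LinearMap.pi fun i : Fin n =>
            (Algebra.trace (ZMod 2) F).comp (LinearMap.proj i))
          (C.restrictScalars (ZMod 2)))
      = Submodule.comap
          (LinearMap.pi fun i : Fin n =>
            (Algebra.linearMap (ZMod 2) F).comp (LinearMap.proj i))
          ((dualCode F n C).restrictScalars (ZMod 2)) := by
  have : FiniteDimensional (ZMod 2) F := Module.Finite.of_finite
  ext v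
  simp only [mem_dualCode, Submodule.mem_comap, Submodule.restrictScalars_mem,
    Submodule.mem_map, LinearMap.pi_apply, LinearMap.comp_apply, LinearMap.proj_apply,
    Algebra.linearMap_apply]
  constructor
  · intro h w hw
    have key : ∀ c : F,
        Algebra.trace (ZMod 2) F ((∑ i, algebraMap (ZMod 2) F (v i) * w i) * c) = 0 := by
      intro c
      have hcw : c • w ∈ C := C.smul_mem c hw
      have h1 := h (fun i => Algebra.trace (ZMod 2) F (c * w i)) ⟨c • w, hcw, rfl⟩
      rw [trace_key] at h1
      rw [← h1]
      congr 1
      rw [Finset.sum_mul]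
      exact Finset.sum_congr rfl fun i _ => by ring
    exact (traceForm_nondegenerate (ZMod 2) F).1
      (∑ i, algebraMap (ZMod 2) F (v i) * w i) (fun c => key c)
  · intro h u hu
    obtain ⟨w, hw, rfl⟩ := hu
    simp only [LinearMap.pi_apply, LinearMap.comp_apply, LinearMap.proj_apply]
    rw [trace_key, h w hw, map_zero]
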